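/- For any connected weighted graph G with maximum volume vol_max and edge expansion θ(G), the second smallest Laplacian eigenvalue satisfies λ₂(G) ≥ vol_max − (vol_max² − θ(G)²)^{1/2}. -/

import Mathlib

/-!
Mohar's argument. If `g` vanishes outside a set of at most half of the vertices, the coarea
inequality for `g ^ 2` gives `2 θ ∑ g² ≤ ∑ A_uv |g_u² - g_v²|`, and Cauchy–Schwarz bounds the right
side by `√(E(g) (4 V ∑ g² - E(g)))`, where `E` is the Dirichlet energy; solving this quadratic
inequality gives `E(g) ≥ 2 (V - √(V² - θ²)) ∑ g²`. A vector `x ⊥ 1` reduces to this case: shifting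
it by a median and splitting it into positive and negative parts does not increase the energy and
does not decrease `∑ x²`.
-/

open Matrix

/-- Second smallest Laplacian eigenvalue (Fiedler value) via the variational
characterization over vectors orthogonal to the all-ones vector. -/
noncomputable def fiedler {ι : Type*} [Fintype ι] (L : Matrix ι ι ℝ) : ℝ :=
  sInf {r : ℝ | ∃ x : ι → ℝ, x ≠ 0 ∧ (∑ i, x i) = 0 ∧
    r = (x ⬝ᵥ L.mulVec x) / (∑ i, (x i) ^ 2)}

/-- Edge expansion of a weighted graph with adjacency matrix `A`:
`θ(G) = min_{S ≠ ∅, |S| ≤ n/2} w(S, V∖S)/|S|`. -/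
noncomputable def edgeExpansion {n : ℕ} (A : Matrix (Fin n) (Fin n) ℝ) : ℝ :=
  sInf {r : ℝ | ∃ S : Finset (Fin n), S.Nonempty ∧ 2 * S.card ≤ n ∧
    r = (∑ i ∈ S, ∑ j ∈ Sᶜ, A i j) / S.card}

open Finset

section WeightedGraph

variable {ι : Type*} [Fintype ι] {A : Matrix ι ι ℝ}

/-- Sums over ordered pairs, so this is twice the Laplacian quadratic form. -/
def dirichletEnergy (A : Matrix ι ι ℝ) (f : ι → ℝ) : ℝ :=
  ∑ u, ∑ v, A u v * (f u - f v) ^ 2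

def totalVariation (A : Matrix ι ι ℝ) (f : ι → ℝ) : ℝ :=
  ∑ u, ∑ v, A u v * |f u - f v|

def cutWeight [DecidableEq ι] (A : Matrix ι ι ℝ) (S : Finset ι) : ℝ :=
  ∑ i ∈ S, ∑ j ∈ Sᶜ, A i j

lemma sum_sum_mul_sq_right (hA : A.IsSymm) (f : ι → ℝ) :
    ∑ u, ∑ v, A u v * f v ^ 2 = ∑ u, (∑ v, A u v) * f u ^ 2 := by
  rw [Finset.sum_comm]
  simp only [Finset.sum_mul, hA.apply]

lemma dirichletEnergy_eq (hA : A.IsSymm) (f : ι → ℝ) :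
    dirichletEnergy A f
      = 2 * (∑ u, (∑ v, A u v) * f u ^ 2 - ∑ u, ∑ v, A u v * (f u * f v)) := by
  have hterm : ∀ u v, A u v * (f u - f v) ^ 2
      = A u v * f u ^ 2 + A u v * f v ^ 2 - 2 * (A u v * (f u * f v)) := fun u v => by ring
  simp only [dirichletEnergy, hterm, sum_add_distrib, sum_sub_distrib, ← mul_sum,
    sum_sum_mul_sq_right hA, ← sum_mul]
  ring

lemma sum_sum_mul_add_sq_add_dirichletEnergy (hA : A.IsSymm) (f : ι → ℝ) :
    ∑ u, ∑ v, A u v * (f u + f v) ^ 2 + dirichletEnergy A f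
      = 4 * ∑ u, (∑ v, A u v) * f u ^ 2 := by
  have hterm : ∀ u v, A u v * (f u + f v) ^ 2
      = A u v * f u ^ 2 + A u v * f v ^ 2 + 2 * (A u v * (f u * f v)) := fun u v => by ring
  simp only [dirichletEnergy_eq hA, hterm, sum_add_distrib, ← mul_sum,
    sum_sum_mul_sq_right hA, ← sum_mul]
  ring

lemma dotProduct_laplacian_mulVec (hA : A.IsSymm) [DecidableEq ι] {d : ι → ℝ}
    (hd : ∀ u, d u = ∑ v, A u v) (x : ι → ℝ) :
    x ⬝ᵥ (Matrix.diagonal d - A) *ᵥ x = dirichletEnergy A x / 2 := by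
  have hdiag : x ⬝ᵥ Matrix.diagonal d *ᵥ x = ∑ u, (∑ v, A u v) * x u ^ 2 := by
    simp only [dotProduct, Matrix.mulVec_diagonal, ← hd]
    exact sum_congr rfl fun u _ => by ring
  have hadj : x ⬝ᵥ A *ᵥ x = ∑ u, ∑ v, A u v * (x u * x v) := by
    simp only [dotProduct, Matrix.mulVec, mul_sum]
    exact sum_congr rfl fun u _ => sum_congr rfl fun v _ => by ring
  rw [Matrix.sub_mulVec, dotProduct_sub, hdiag, hadj, dirichletEnergy_eq hA]
  ring

lemma dirichletEnergy_nonneg (hA : ∀ u v, 0 ≤ A u v) (f : ι → ℝ) : 0 ≤ dirichletEnergy A f :=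
  sum_nonneg fun u _ => sum_nonneg fun v _ => mul_nonneg (hA u v) (sq_nonneg _)

lemma dirichletEnergy_sub_const (f : ι → ℝ) (c : ℝ) :
    dirichletEnergy A (fun u => f u - c) = dirichletEnergy A f := by
  simp only [dirichletEnergy, sub_sub_sub_cancel_right]

lemma sq_posPart_sub_add_sq_negPart_sub_le (a b : ℝ) :
    (a⁺ - b⁺) ^ 2 + (a⁻ - b⁻) ^ 2 ≤ (a - b) ^ 2 := by
  rcases le_total 0 a with ha | ha <;> rcases le_total 0 b with hb | hb <;>
    simp only [posPart_eq_self.2, posPart_eq_zero.2, negPart_eq_zero.2, negPart_eq_neg.2,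
      ha, hb] <;> nlinarith

lemma posPart_sq_add_negPart_sq (a : ℝ) : a⁺ ^ 2 + a⁻ ^ 2 = a ^ 2 := by
  rcases le_total 0 a with ha | ha <;>
    simp only [posPart_eq_self.2, posPart_eq_zero.2, negPart_eq_zero.2, negPart_eq_neg.2, ha] <;>
    ring

lemma dirichletEnergy_posPart_add_negPart_le (hA : ∀ u v, 0 ≤ A u v) (f : ι → ℝ) :
    dirichletEnergy A (fun u => (f u)⁺) + dirichletEnergy A (fun u => (f u)⁻)
      ≤ dirichletEnergy A f := by
  simp only [dirichletEnergy, ← sum_add_distrib, ← mul_add]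
  exact sum_le_sum fun u _ => sum_le_sum fun v _ =>
    mul_le_mul_of_nonneg_left (sq_posPart_sub_add_sq_negPart_sub_le _ _) (hA u v)

lemma totalVariation_sq_sq_le_dirichletEnergy_mul (hA : ∀ u v, 0 ≤ A u v) (g : ι → ℝ) :
    totalVariation A (fun u => g u ^ 2) ^ 2
      ≤ dirichletEnergy A g * ∑ u, ∑ v, A u v * (g u + g v) ^ 2 := by
  simp only [totalVariation, dirichletEnergy, ← Fintype.sum_prod_type']
  refine sum_sq_le_sum_mul_sum_of_sq_le_mul _ (fun p _ => mul_nonneg (hA _ _) (sq_nonneg _))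
    (fun p _ => mul_nonneg (hA _ _) (sq_nonneg _)) fun p _ => le_of_eq ?_
  rw [mul_pow, sq_abs]
  ring

lemma sub_sqrt_sq_sub_sq_mul_le {V θ G s : ℝ} (hG : 0 ≤ G)
    (h : θ ^ 2 * G ^ 2 ≤ s * (2 * V * G - s)) : (V - √(V ^ 2 - θ ^ 2)) * G ≤ s := by
  have hsq : (V * G - s) ^ 2 ≤ (V ^ 2 - θ ^ 2) * G ^ 2 := by nlinarith
  have habs := Real.abs_le_sqrt hsq
  rw [Real.sqrt_mul' _ (sq_nonneg G), Real.sqrt_sq hG] at habs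
  linarith [le_abs_self (V * G - s)]

lemma sum_sq_le_sum_sub_sq {x : ι → ℝ} (hx : ∑ u, x u = 0) (c : ℝ) :
    ∑ u, x u ^ 2 ≤ ∑ u, (x u - c) ^ 2 := by
  have hexpand : ∑ u, (x u - c) ^ 2 = ∑ u, x u ^ 2 + Fintype.card ι * c ^ 2 := by
    simp only [sub_sq, sum_add_distrib, sum_sub_distrib, ← sum_mul, ← mul_sum, hx, sum_const,
      card_univ, nsmul_eq_mul]
    ring
  rw [hexpand]
  have : 0 ≤ (Fintype.card ι : ℝ) * c ^ 2 := by positivity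
  linarith

lemma exists_two_mul_card_lt_le [Nonempty ι] {α : Type*} [LinearOrder α] (f : ι → α) :
    ∃ c, 2 * #{u | c < f u} ≤ Fintype.card ι ∧ 2 * #{u | f u < c} ≤ Fintype.card ι := by
  set n := Fintype.card ι
  let e := Fintype.equivFin ι
  obtain ⟨σ, hmono⟩ : ∃ σ : Equiv.Perm (Fin n), Monotone ((f ∘ e.symm) ∘ σ) :=
    ⟨_, Tuple.monotone_sort _⟩
  have hn : n / 2 < n := Nat.div_lt_self Fintype.card_pos one_lt_two
  refine ⟨f (e.symm (σ ⟨n / 2, hn⟩)), ?_, ?_⟩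
  · have hle : #{u | f (e.symm (σ ⟨n / 2, hn⟩)) < f u} ≤ #(Ioi (⟨n / 2, hn⟩ : Fin n)) :=
      card_le_card_of_injOn (e.trans σ.symm) (fun u hu => by
        simp only [coe_filter, mem_univ, true_and, Set.mem_ofPred_eq, coe_Ioi, Set.mem_Ioi] at hu ⊢
        by_contra! h
        exact (hmono h).not_gt (by simpa using hu)) (e.trans σ.symm).injective.injOn
    rw [Fin.card_Ioi, Fin.val_mk] at hle
    omega
  · have hle : #{u | f u < f (e.symm (σ ⟨n / 2, hn⟩))} ≤ #(Iio (⟨n / 2, hn⟩ : Fin n)) :=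
      card_le_card_of_injOn (e.trans σ.symm) (fun u hu => by
        simp only [coe_filter, mem_univ, true_and, Set.mem_ofPred_eq, coe_Iio, Set.mem_Iio] at hu ⊢
        by_contra! h
        exact (hmono h).not_gt (by simpa using hu)) (e.trans σ.symm).injective.injOn
    rw [Fin.card_Iio, Fin.val_mk] at hle
    omega

section Cut

variable [DecidableEq ι]

lemma totalVariation_indicator (hA : A.IsSymm) (S : Finset ι) :
    totalVariation A (fun u => if u ∈ S then 1 else 0) = 2 * cutWeight A S := by
  have hterm : ∀ u v, A u v * |(if u ∈ S then (1 : ℝ) else 0) - if v ∈ S then 1 else 0|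
      = (if u ∈ S then 1 else 0) * (if v ∈ Sᶜ then A u v else 0)
        + (if u ∈ Sᶜ then 1 else 0) * if v ∈ S then A u v else 0 := fun u v => by
    by_cases hu : u ∈ S <;> by_cases hv : v ∈ S <;> simp [hu, hv]
  have hswap : ∑ u ∈ Sᶜ, ∑ v ∈ S, A u v = cutWeight A S := by
    rw [sum_comm (f := fun u v => A u v)]
    exact sum_congr rfl fun v _ => sum_congr rfl fun u _ => hA.apply v u
  simp only [totalVariation, hterm, sum_add_distrib]
  simp only [← mul_sum, sum_ite_mem, univ_inter]
  simp only [boole_mul, sum_ite_mem, univ_inter, hswap]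
  rw [cutWeight]
  ring

lemma totalVariation_add_indicator (hA : A.IsSymm) {S : Finset ι} {q : ι → ℝ}
    (hq : ∀ u, 0 ≤ q u) (hqS : ∀ u ∉ S, q u = 0) {m : ℝ} (hm : 0 ≤ m) :
    totalVariation A (fun u => q u + if u ∈ S then m else 0)
      = totalVariation A q + 2 * m * cutWeight A S := by
  have hterm : ∀ u v, |(q u + if u ∈ S then m else 0) - (q v + if v ∈ S then m else 0)|
      = |q u - q v| + m * |(if u ∈ S then (1 : ℝ) else 0) - if v ∈ S then 1 else 0| := by
    intro u v
    by_cases hu : u ∈ S <;> by_cases hv : v ∈ S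
    · simp [hu, hv]
    · simp [hu, hv, hqS v hv, abs_of_nonneg (hq u), abs_of_nonneg (add_nonneg (hq u) hm)]
    · rw [abs_sub_comm, abs_sub_comm (q u)]
      simp [hu, hv, hqS u hu, abs_of_nonneg (hq v), abs_of_nonneg (add_nonneg (hq v) hm)]
    · simp [hu, hv]
  rw [mul_comm 2 m, mul_assoc, ← totalVariation_indicator hA]
  simp only [totalVariation, hterm, mul_add, sum_add_distrib, mul_sum]
  congr 1
  exact sum_congr rfl fun u _ => sum_congr rfl fun v _ => by ring

/-- Discrete coarea inequality: peel off the layer `min q • 1_P`, whose contribution is a cut. -/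
lemma two_mul_mul_sum_le_totalVariation (hA : A.IsSymm) {θ : ℝ} (P : Finset ι)
    (hcut : ∀ S ⊆ P, S.Nonempty → θ * #S ≤ cutWeight A S) {q : ι → ℝ}
    (hq : ∀ u, 0 ≤ q u) (hqP : ∀ u ∉ P, q u = 0) :
    2 * θ * ∑ u, q u ≤ totalVariation A q := by
  induction P using Finset.strongInduction generalizing q with
  | H P ih =>
  rcases P.eq_empty_or_nonempty with rfl | hP
  · have hq0 : q = 0 := funext fun u => hqP u (notMem_empty u)
    simp [hq0, totalVariation]
  obtain ⟨u₀, hu₀, hmin⟩ := P.exists_min_image q hP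
  set m := q u₀
  set q' : ι → ℝ := fun u => q u - if u ∈ P then m else 0
  have hq' : ∀ u, 0 ≤ q' u := fun u => by
    by_cases hu : u ∈ P <;> simp [q', hu, hmin u, hq u]
  have hq'P : ∀ u ∉ P.erase u₀, q' u = 0 := fun u hu => by
    by_cases huP : u ∈ P
    · obtain rfl : u = u₀ := by simpa [huP] using hu
      simp [q', huP, m]
    · simp [q', huP, hqP u huP]
  have hdecomp : (fun u => q' u + if u ∈ P then m else 0) = q := by
    funext u; simp [q']
  have hsum : ∑ u, q u = ∑ u, q' u + m * #P := by
    simp only [q', sum_sub_distrib, sum_ite_mem, univ_inter, sum_const, nsmul_eq_mul]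
    ring
  have hq'θ := ih (P.erase u₀) (erase_ssubset hu₀)
    (fun S hS => hcut S (hS.trans (erase_subset _ _))) hq' hq'P
  have hPθ := mul_le_mul_of_nonneg_left (hcut P subset_rfl hP) (hq u₀)
  calc 2 * θ * ∑ u, q u ≤ totalVariation A q' + 2 * m * cutWeight A P := by
        rw [hsum]; nlinarith
    _ = totalVariation A q := by
        rw [← totalVariation_add_indicator hA hq'
          (fun u hu => hq'P u fun h => hu (mem_of_mem_erase h)) (hq u₀), hdecomp]

lemma two_mul_sub_sqrt_mul_sum_sq_le_dirichletEnergy (hA : A.IsSymm) (hA0 : ∀ u v, 0 ≤ A u v)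
    {V θ : ℝ} (hV : ∀ u, ∑ v, A u v ≤ V) (hθ : 0 ≤ θ) (P : Finset ι)
    (hcut : ∀ S ⊆ P, S.Nonempty → θ * #S ≤ cutWeight A S) {g : ι → ℝ}
    (hgP : ∀ u ∉ P, g u = 0) :
    2 * (V - √(V ^ 2 - θ ^ 2)) * ∑ u, g u ^ 2 ≤ dirichletEnergy A g := by
  set G := ∑ u, g u ^ 2
  set D := dirichletEnergy A g
  have hG : 0 ≤ G := sum_nonneg fun u _ => sq_nonneg _
  have hD : 0 ≤ D := dirichletEnergy_nonneg hA0 g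
  have hcoarea : 2 * θ * G ≤ totalVariation A (fun u => g u ^ 2) :=
    two_mul_mul_sum_le_totalVariation hA P hcut (fun u => sq_nonneg _)
      (fun u hu => by simp [hgP u hu])
  have hdeg : ∑ u, (∑ v, A u v) * g u ^ 2 ≤ V * G := by
    rw [mul_sum]
    exact sum_le_sum fun u _ => mul_le_mul_of_nonneg_right (hV u) (sq_nonneg _)
  have hplus := sum_sum_mul_add_sq_add_dirichletEnergy hA g
  have hbound : (2 * θ * G) ^ 2 ≤ D * (4 * V * G - D) :=
    calc (2 * θ * G) ^ 2 ≤ totalVariation A (fun u => g u ^ 2) ^ 2 :=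
          pow_le_pow_left₀ (mul_nonneg (mul_nonneg zero_le_two hθ) hG) hcoarea 2
      _ ≤ D * ∑ u, ∑ v, A u v * (g u + g v) ^ 2 := totalVariation_sq_sq_le_dirichletEnergy_mul hA0 g
      _ ≤ D * (4 * V * G - D) := mul_le_mul_of_nonneg_left (by linarith) hD
  have := sub_sqrt_sq_sub_sq_mul_le (V := V) (θ := θ) (s := D / 2) hG (by nlinarith)
  linarith

lemma two_mul_sub_sqrt_mul_sum_sq_le_dirichletEnergy_of_sum_eq_zero [Nonempty ι]
    (hA : A.IsSymm) (hA0 : ∀ u v, 0 ≤ A u v) {V θ : ℝ} (hV : ∀ u, ∑ v, A u v ≤ V) (hθ : 0 ≤ θ)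
    (hcut : ∀ S : Finset ι, S.Nonempty → 2 * #S ≤ Fintype.card ι → θ * #S ≤ cutWeight A S)
    {x : ι → ℝ} (hx : ∑ u, x u = 0) :
    2 * (V - √(V ^ 2 - θ ^ 2)) * ∑ u, x u ^ 2 ≤ dirichletEnergy A x := by
  obtain ⟨c, hpos, hneg⟩ := exists_two_mul_card_lt_le x
  have hcut' : ∀ P : Finset ι, 2 * #P ≤ Fintype.card ι →
      ∀ S ⊆ P, S.Nonempty → θ * #S ≤ cutWeight A S :=
    fun P hP S hS hne => hcut S hne ((Nat.mul_le_mul_left 2 (card_le_card hS)).trans hP)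
  have hμ : 0 ≤ V - √(V ^ 2 - θ ^ 2) := by
    obtain ⟨u⟩ := ‹Nonempty ι›
    have hV0 : 0 ≤ V := (sum_nonneg fun v _ => hA0 u v).trans (hV u)
    have := Real.sqrt_le_sqrt (show V ^ 2 - θ ^ 2 ≤ V ^ 2 by nlinarith)
    rw [Real.sqrt_sq hV0] at this
    linarith
  have hplus := two_mul_sub_sqrt_mul_sum_sq_le_dirichletEnergy hA hA0 hV hθ _ (hcut' _ hpos)
    (g := fun u => (x u - c)⁺) fun u hu => posPart_eq_zero.2 (by simpa using hu)
  have hminus := two_mul_sub_sqrt_mul_sum_sq_le_dirichletEnergy hA hA0 hV hθ _ (hcut' _ hneg)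
    (g := fun u => (x u - c)⁻) fun u hu => negPart_eq_zero.2 (by simpa using hu)
  have hsplit : ∑ u, (x u - c)⁺ ^ 2 + ∑ u, (x u - c)⁻ ^ 2 = ∑ u, (x u - c) ^ 2 := by
    rw [← sum_add_distrib]
    exact sum_congr rfl fun u _ => posPart_sq_add_negPart_sq _
  have henergy := dirichletEnergy_posPart_add_negPart_le hA0 (fun u => x u - c)
  rw [dirichletEnergy_sub_const] at henergy
  nlinarith [mul_le_mul_of_nonneg_left (sum_sq_le_sum_sub_sq hx c) hμ]

end Cut

end WeightedGraph

lemma le_fiedler {ι : Type*} [Fintype ι] {L : Matrix ι ι ℝ} {μ : ℝ} (hι : 1 < Fintype.card ι)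
    (h : ∀ x : ι → ℝ, ∑ i, x i = 0 → μ * ∑ i, x i ^ 2 ≤ x ⬝ᵥ L *ᵥ x) : μ ≤ fiedler L := by
  classical
  obtain ⟨i, j, hij⟩ := Fintype.one_lt_card_iff_nontrivial.1 hι |>.exists_pair_ne
  refine le_csInf ⟨_, Pi.single i 1 - Pi.single j 1, ?_, ?_, rfl⟩ ?_
  · exact sub_ne_zero.2 fun h => by simpa [hij] using congrFun h i
  · simp
  · rintro r ⟨x, hx0, hxs, rfl⟩
    have hpos : 0 < ∑ i, x i ^ 2 := by
      obtain ⟨k, hk⟩ := Function.ne_iff.1 hx0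
      have hk : x k ≠ 0 := hk
      exact lt_of_lt_of_le (by positivity) (single_le_sum (fun i _ => sq_nonneg (x i)) (mem_univ k))
    rw [le_div_iff₀ hpos]
    exact h x hxs

lemma fiedler_nonneg {ι : Type*} [Fintype ι] {L : Matrix ι ι ℝ}
    (hL : ∀ x : ι → ℝ, 0 ≤ x ⬝ᵥ L *ᵥ x) : 0 ≤ fiedler L :=
  Real.sInf_nonneg fun _ ⟨x, _, _, hr⟩ => hr ▸ div_nonneg (hL x) (sum_nonneg fun _ _ => sq_nonneg _)

section EdgeExpansion

variable {n : ℕ} {A : Matrix (Fin n) (Fin n) ℝ}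

lemma edgeExpansion_nonneg (hA : ∀ u v, 0 ≤ A u v) : 0 ≤ edgeExpansion A :=
  Real.sInf_nonneg fun _ ⟨_, _, _, hr⟩ => hr ▸
    div_nonneg (sum_nonneg fun i _ => sum_nonneg fun j _ => hA i j) (Nat.cast_nonneg _)

lemma edgeExpansion_mul_card_le (hA : ∀ u v, 0 ≤ A u v) {S : Finset (Fin n)} (hS : S.Nonempty)
    (hSn : 2 * #S ≤ n) : edgeExpansion A * #S ≤ cutWeight A S := by
  rw [← le_div_iff₀ (by exact_mod_cast hS.card_pos)]
  refine csInf_le ⟨0, ?_⟩ ⟨S, hS, hSn, rfl⟩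
  rintro _ ⟨T, _, _, rfl⟩
  exact div_nonneg (sum_nonneg fun i _ => sum_nonneg fun j _ => hA i j) (Nat.cast_nonneg _)

lemma edgeExpansion_of_lt_two (A : Matrix (Fin n) (Fin n) ℝ) (hn : n < 2) :
    edgeExpansion A = 0 := by
  refine (congrArg sInf (Set.eq_empty_of_forall_notMem ?_)).trans Real.sInf_empty
  rintro _ ⟨S, hS, hSn, -⟩
  have := hS.card_pos
  omega

end EdgeExpansion

theorem stmt19_general {n : ℕ} (A : Matrix (Fin n) (Fin n) ℝ)
    (hsym : A.IsSymm) (hnonneg : ∀ u v, 0 ≤ A u v)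
    (d : Fin n → ℝ) (hd : ∀ u, d u = ∑ v, A u v)
    (L : Matrix (Fin n) (Fin n) ℝ) (hL : L = Matrix.diagonal d - A)
    (volmax : ℝ) (hmax : (∀ u, d u ≤ volmax) ∧ ∃ u, d u = volmax) :
    fiedler L ≥ volmax - Real.sqrt (volmax ^ 2 - edgeExpansion A ^ 2) := by
  subst hL
  have hform := dotProduct_laplacian_mulVec hsym hd
  rcases lt_or_ge n 2 with hn | hn
  · rw [edgeExpansion_of_lt_two A hn, zero_pow two_ne_zero, sub_zero, Real.sqrt_sq_eq_abs]
    exact (sub_nonpos.2 (le_abs_self volmax)).trans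
      (fiedler_nonneg fun x => hform x ▸ div_nonneg (dirichletEnergy_nonneg hnonneg x) zero_le_two)
  · have : Nonempty (Fin n) := ⟨⟨0, by omega⟩⟩
    refine le_fiedler (by rw [Fintype.card_fin]; omega) fun x hx => ?_
    have := two_mul_sub_sqrt_mul_sum_sq_le_dirichletEnergy_of_sum_eq_zero hsym hnonneg
      (fun u => hd u ▸ hmax.1 u) (edgeExpansion_nonneg hnonneg)
      (fun S hS hSn => edgeExpansion_mul_card_le hnonneg hS (by simpa using hSn)) hx
    rw [hform]
    linarith

/-- For any connected weighted graph `G` with maximum volume `vol_max` and edge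
expansion `θ(G)`, the second smallest Laplacian eigenvalue satisfies
`λ₂(G) ≥ vol_max − √(vol_max² − θ(G)²)`. -/
theorem stmt19 {n : ℕ} (A : Matrix (Fin n) (Fin n) ℝ)
    (hsym : A.IsSymm) (hnonneg : ∀ u v, 0 ≤ A u v)
    (hconn : (SimpleGraph.fromRel fun u v => A u v ≠ 0).Connected)
    (d : Fin n → ℝ) (hd : ∀ u, d u = ∑ v, A u v)
    (L : Matrix (Fin n) (Fin n) ℝ) (hL : L = Matrix.diagonal d - A)
    (volmax : ℝ) (hmax : (∀ u, d u ≤ volmax) ∧ ∃ u, d u = volmax) :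
    fiedler L ≥ volmax - Real.sqrt (volmax ^ 2 - edgeExpansion A ^ 2) :=
  stmt19_general A hsym hnonneg d hd L hL volmax hmax
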